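/- Let C ⊆ ℝ^m be a closed pointed convex cone with nonempty interior and C ≠ ℝ^m, and let x, y belong to the topological interior of C. Then ⟨f,x⟩ > 0 and ⟨f,y⟩ > 0 for every nonzero f ∈ C*, and Yamada's supporting-hyperplane formula holds: d_h(x,y) = (1/2)·sup{log(⟨f,x⟩/⟨f,y⟩) : f ∈ C*, f ≠ 0} + (1/2)·sup{log(⟨f,y⟩/⟨f,x⟩) : f ∈ C*, f ≠ 0}. (Here ⟨f,z⟩/‖f‖ is the distance from z to the supporting hyperplane {w : ⟨f,w⟩ = 0} of C, so this expresses the Hilbert metric via ratios of distances to supporting hyperplanes.) -/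

import Mathlib

open scoped RealInnerProductSpace

/-- Birkhoff coefficient `M(x,y) = inf {λ ≥ 0 : λ•y - x ∈ C}`. -/
noncomputable def Mcoef {m : ℕ} (C : Set (EuclideanSpace ℝ (Fin m)))
    (x y : EuclideanSpace ℝ (Fin m)) : ℝ :=
  sInf {l : ℝ | 0 ≤ l ∧ l • y - x ∈ C}

/-- Birkhoff coefficient `m(x,y) = sup {λ ≥ 0 : x - λ•y ∈ C}`. -/
noncomputable def mcoef {m : ℕ} (C : Set (EuclideanSpace ℝ (Fin m)))
    (x y : EuclideanSpace ℝ (Fin m)) : ℝ :=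
  sSup {l : ℝ | 0 ≤ l ∧ x - l • y ∈ C}

/-- Birkhoff's version of the Hilbert metric `d_h(x,y) = (1/2)·log(M(x,y)/m(x,y))`. -/
noncomputable def dh {m : ℕ} (C : Set (EuclideanSpace ℝ (Fin m)))
    (x y : EuclideanSpace ℝ (Fin m)) : ℝ :=
  (1 / 2) * Real.log (Mcoef C x y / mcoef C x y)

/-- The dual cone `C* = {f : ⟨f,z⟩ ≥ 0 for all z ∈ C}`. -/
def dualCone {m : ℕ} (C : Set (EuclideanSpace ℝ (Fin m))) :
    Set (EuclideanSpace ℝ (Fin m)) :=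
  {f | ∀ z ∈ C, 0 ≤ ⟪f, z⟫}
/-!
A closed convex cone is the intersection of the half-spaces `{w | 0 ≤ ⟪f, w⟫}`, `f ∈ C*`
(Farkas). Hence, as `⟪f, y⟫ > 0` for interior `y`, `λ • y - x ∈ C` iff `λ` bounds the ratios
`⟪f, x⟫ / ⟪f, y⟫` (`f ∈ C*`, `f ≠ 0`) from above, and `x - λ • y ∈ C` iff it bounds them from
below. So `M(x,y)` and `m(x,y)` are the supremum and the infimum of these ratios, and the formula
follows because `log` is increasing and continuous.
-/

open Set

lemma exists_pos_sub_smul_mem_of_mem_interior {E : Type*} [AddCommGroup E] [TopologicalSpace E]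
    [IsTopologicalAddGroup E] [Module ℝ E] [ContinuousSMul ℝ E] {s : Set E} {u : E} (v : E)
    (hu : u ∈ interior s) : ∃ t : ℝ, 0 < t ∧ u - t • v ∈ s := by
  have hcont : Filter.Tendsto (fun t : ℝ => u - t • v) (nhdsWithin 0 (Ioi 0)) (nhds u) := by
    have : Continuous fun t : ℝ => u - t • v := by fun_prop
    simpa using (this.tendsto 0).mono_left nhdsWithin_le_nhds
  obtain ⟨t, hts, ht⟩ :=
    ((hcont.eventually (mem_interior_iff_mem_nhds.1 hu)).and self_mem_nhdsWithin).exists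
  exact ⟨t, ht, hts⟩

section InnerProductSpace

variable {E : Type*} [NormedAddCommGroup E] [InnerProductSpace ℝ E]

lemma inner_smul_sub_nonneg_iff {f x y : E} (hy : 0 < ⟪f, y⟫) (l : ℝ) :
    0 ≤ ⟪f, l • y - x⟫ ↔ ⟪f, x⟫ / ⟪f, y⟫ ≤ l := by
  rw [inner_sub_right, real_inner_smul_right, sub_nonneg, div_le_iff₀ hy]

lemma inner_sub_smul_nonneg_iff {f x y : E} (hy : 0 < ⟪f, y⟫) (l : ℝ) :
    0 ≤ ⟪f, x - l • y⟫ ↔ l ≤ ⟪f, x⟫ / ⟪f, y⟫ := by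
  rw [inner_sub_right, real_inner_smul_right, sub_nonneg, le_div_iff₀ hy]

end InnerProductSpace

namespace Real

lemma log_csSup_of_pos {A : Set ℝ} (hA : A.Nonempty) (hbdd : BddAbove A)
    (hpos : ∀ a ∈ A, 0 < a) : log (sSup A) = sSup (log '' A) := by
  have hsup : 0 < sSup A := (hpos _ hA.some_mem).trans_le (le_csSup hbdd hA.some_mem)
  exact MonotoneOn.map_csSup_of_continuousWithinAt (continuousAt_log hsup.ne').continuousWithinAt
    (strictMonoOn_log.monotoneOn.mono hpos) hA hbdd

lemma neg_log_csInf_of_pos {A : Set ℝ} (hA : A.Nonempty) (hbdd : BddBelow A)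
    (hpos : 0 < sInf A) : -log (sInf A) = sSup ((fun a => -log a) '' A) :=
  AntitoneOn.map_csInf_of_continuousWithinAt (continuousAt_log hpos.ne').neg.continuousWithinAt
    (fun _ ha _ _ hab => neg_le_neg (log_le_log (hpos.trans_le (csInf_le hbdd ha)) hab)) hA hbdd

end Real

section Cone

variable {m : ℕ} {C : Set (EuclideanSpace ℝ (Fin m))} {x y : EuclideanSpace ℝ (Fin m)}

lemma inner_pos_of_mem_interior {f w : EuclideanSpace ℝ (Fin m)} (hw : w ∈ interior C)
    (hf : f ∈ dualCone C) (hf0 : f ≠ 0) : 0 < ⟪f, w⟫ := by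
  obtain ⟨t, ht, htC⟩ := exists_pos_sub_smul_mem_of_mem_interior f hw
  have h := hf _ htC
  rw [inner_sub_right, real_inner_smul_right, real_inner_self_eq_norm_sq] at h
  nlinarith [mul_pos ht (pow_pos (norm_pos_iff.2 hf0) 2)]

lemma mem_of_forall_mem_dualCone_inner_nonneg (hadd : ∀ a ∈ C, ∀ b ∈ C, a + b ∈ C)
    (hsmul : ∀ c : ℝ, 0 < c → ∀ a ∈ C, c • a ∈ C) (hclosed : IsClosed C) (hC : C.Nonempty)
    {z : EuclideanSpace ℝ (Fin m)} (hz : ∀ f ∈ dualCone C, 0 ≤ ⟪f, z⟫) : z ∈ C := by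
  let K : ConvexCone ℝ (EuclideanSpace ℝ (Fin m)) :=
    ⟨C, fun c hc a ha => hsmul c hc a ha, fun a ha b hb => hadd a ha b hb⟩
  let P : ProperCone ℝ (EuclideanSpace ℝ (Fin m)) :=
    ⟨K.toPointedCone (.of_nonempty_of_isClosed hC hclosed), hclosed⟩
  by_contra hzC
  obtain ⟨f, hf, hfz⟩ := P.hyperplane_separation' (x₀ := z) hzC
  have := hz f fun w hw => real_inner_comm f w ▸ hf w hw
  rw [real_inner_comm] at this
  linarith

lemma exists_ne_zero_mem_dualCone (hbidual : ∀ z, (∀ f ∈ dualCone C, 0 ≤ ⟪f, z⟫) → z ∈ C)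
    (hne : C ≠ univ) : ∃ f ∈ dualCone C, f ≠ 0 := by
  by_contra! h
  refine hne (eq_univ_of_forall fun z => hbidual z fun f hf => ?_)
  rw [h f hf, inner_zero_left]

variable (C x y) in
def hyperplaneRatios : Set ℝ := {r | ∃ f ∈ dualCone C, f ≠ 0 ∧ r = ⟪f, x⟫ / ⟪f, y⟫}

lemma image_hyperplaneRatios (g : ℝ → ℝ) :
    g '' hyperplaneRatios C x y = {r | ∃ f ∈ dualCone C, f ≠ 0 ∧ r = g (⟪f, x⟫ / ⟪f, y⟫)} := by
  ext r
  simp only [hyperplaneRatios, mem_image, mem_ofPred_eq]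
  constructor
  · rintro ⟨_, ⟨f, hf, hf0, rfl⟩, rfl⟩
    exact ⟨f, hf, hf0, rfl⟩
  · rintro ⟨f, hf, hf0, rfl⟩
    exact ⟨_, ⟨f, hf, hf0, rfl⟩, rfl⟩

lemma image_neg_log_hyperplaneRatios :
    (fun a => -Real.log a) '' hyperplaneRatios C x y =
      {r | ∃ f ∈ dualCone C, f ≠ 0 ∧ r = Real.log (⟪f, y⟫ / ⟪f, x⟫)} := by
  simp only [image_hyperplaneRatios, ← Real.log_inv, inv_div]

lemma smul_sub_mem_iff_mem_upperBounds (hbidual : ∀ z, (∀ f ∈ dualCone C, 0 ≤ ⟪f, z⟫) → z ∈ C)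
    (hy : y ∈ interior C) (l : ℝ) :
    l • y - x ∈ C ↔ l ∈ upperBounds (hyperplaneRatios C x y) := by
  refine ⟨fun h => ?_, fun h => hbidual _ fun f hf => ?_⟩
  · rintro _ ⟨f, hf, hf0, rfl⟩
    exact (inner_smul_sub_nonneg_iff (inner_pos_of_mem_interior hy hf hf0) l).1 (hf _ h)
  · rcases eq_or_ne f 0 with rfl | hf0
    · rw [inner_zero_left]
    · exact (inner_smul_sub_nonneg_iff (inner_pos_of_mem_interior hy hf hf0) l).2
        (h ⟨f, hf, hf0, rfl⟩)

lemma sub_smul_mem_iff_mem_lowerBounds (hbidual : ∀ z, (∀ f ∈ dualCone C, 0 ≤ ⟪f, z⟫) → z ∈ C)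
    (hy : y ∈ interior C) (l : ℝ) :
    x - l • y ∈ C ↔ l ∈ lowerBounds (hyperplaneRatios C x y) := by
  refine ⟨fun h => ?_, fun h => hbidual _ fun f hf => ?_⟩
  · rintro _ ⟨f, hf, hf0, rfl⟩
    exact (inner_sub_smul_nonneg_iff (inner_pos_of_mem_interior hy hf hf0) l).1 (hf _ h)
  · rcases eq_or_ne f 0 with rfl | hf0
    · rw [inner_zero_left]
    · exact (inner_sub_smul_nonneg_iff (inner_pos_of_mem_interior hy hf hf0) l).2
        (h ⟨f, hf, hf0, rfl⟩)

lemma exists_pos_mem_lowerBounds_hyperplaneRatios (hx : x ∈ interior C) (hy : y ∈ interior C) :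
    ∃ t, 0 < t ∧ t ∈ lowerBounds (hyperplaneRatios C x y) := by
  obtain ⟨t, ht, htC⟩ := exists_pos_sub_smul_mem_of_mem_interior y hx
  refine ⟨t, ht, ?_⟩
  rintro _ ⟨f, hf, hf0, rfl⟩
  exact (inner_sub_smul_nonneg_iff (inner_pos_of_mem_interior hy hf hf0) t).1 (hf _ htC)

lemma bddAbove_hyperplaneRatios (hx : x ∈ interior C) (hy : y ∈ interior C) :
    BddAbove (hyperplaneRatios C x y) := by
  obtain ⟨t, ht, htC⟩ := exists_pos_sub_smul_mem_of_mem_interior x hy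
  refine ⟨t⁻¹, ?_⟩
  rintro _ ⟨f, hf, hf0, rfl⟩
  have h := (inner_sub_smul_nonneg_iff (inner_pos_of_mem_interior hx hf hf0) t).1 (hf _ htC)
  rw [le_div_iff₀ (inner_pos_of_mem_interior hx hf hf0)] at h
  rw [div_le_iff₀ (inner_pos_of_mem_interior hy hf hf0), inv_mul_eq_div, le_div_iff₀ ht]
  linarith

lemma Mcoef_eq_sSup_hyperplaneRatios (hbidual : ∀ z, (∀ f ∈ dualCone C, 0 ≤ ⟪f, z⟫) → z ∈ C)
    (hx : x ∈ interior C) (hy : y ∈ interior C) (hR : (hyperplaneRatios C x y).Nonempty) :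
    Mcoef C x y = sSup (hyperplaneRatios C x y) := by
  obtain ⟨t, ht, hlower⟩ := exists_pos_mem_lowerBounds_hyperplaneRatios hx hy
  have hset : {l : ℝ | 0 ≤ l ∧ l • y - x ∈ C} = upperBounds (hyperplaneRatios C x y) := by
    ext l
    rw [mem_ofPred_eq, smul_sub_mem_iff_mem_upperBounds hbidual hy,
      and_iff_right_of_imp fun hl => ht.le.trans ((hlower hR.some_mem).trans (hl hR.some_mem))]
  rw [Mcoef, hset, csInf_upperBounds_eq_csSup (bddAbove_hyperplaneRatios hx hy) hR]

lemma mcoef_eq_sInf_hyperplaneRatios (hbidual : ∀ z, (∀ f ∈ dualCone C, 0 ≤ ⟪f, z⟫) → z ∈ C)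
    (hx : x ∈ interior C) (hy : y ∈ interior C) (hR : (hyperplaneRatios C x y).Nonempty) :
    mcoef C x y = sInf (hyperplaneRatios C x y) := by
  obtain ⟨t, ht, hlower⟩ := exists_pos_mem_lowerBounds_hyperplaneRatios hx hy
  have hset : {l : ℝ | 0 ≤ l ∧ x - l • y ∈ C} = Icc 0 (sInf (hyperplaneRatios C x y)) := by
    ext l
    rw [mem_ofPred_eq, sub_smul_mem_iff_mem_lowerBounds hbidual hy,
      (isGLB_csInf hR ⟨t, hlower⟩).lowerBounds_eq]
    rfl
  rw [mcoef, hset, csSup_Icc (ht.le.trans (le_csInf hR hlower))]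

end Cone

theorem stmt8_general {m : ℕ} (C : Set (EuclideanSpace ℝ (Fin m)))
    (hadd : ∀ a ∈ C, ∀ b ∈ C, a + b ∈ C)
    (hsmul : ∀ c : ℝ, 0 < c → ∀ a ∈ C, c • a ∈ C)
    (hclosed : IsClosed C) (hne : C ≠ Set.univ)
    (x y : EuclideanSpace ℝ (Fin m)) (hx : x ∈ interior C) (hy : y ∈ interior C) :
    (∀ f ∈ dualCone C, f ≠ 0 → 0 < ⟪f, x⟫) ∧
    (∀ f ∈ dualCone C, f ≠ 0 → 0 < ⟪f, y⟫) ∧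
    dh C x y =
      (1 / 2) * sSup {r : ℝ | ∃ f ∈ dualCone C, f ≠ 0 ∧ r = Real.log (⟪f, x⟫ / ⟪f, y⟫)} +
      (1 / 2) * sSup {r : ℝ | ∃ f ∈ dualCone C, f ≠ 0 ∧ r = Real.log (⟪f, y⟫ / ⟪f, x⟫)} := by
  have hbidual : ∀ z, (∀ f ∈ dualCone C, 0 ≤ ⟪f, z⟫) → z ∈ C := fun _ =>
    mem_of_forall_mem_dualCone_inner_nonneg hadd hsmul hclosed ⟨x, interior_subset hx⟩
  obtain ⟨f, hf, hf0⟩ := exists_ne_zero_mem_dualCone hbidual hne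
  have hR : (hyperplaneRatios C x y).Nonempty := ⟨_, f, hf, hf0, rfl⟩
  obtain ⟨t, ht, hlower⟩ := exists_pos_mem_lowerBounds_hyperplaneRatios hx hy
  have hinf : 0 < sInf (hyperplaneRatios C x y) := ht.trans_le (le_csInf hR hlower)
  have hsup : 0 < sSup (hyperplaneRatios C x y) :=
    hinf.trans_le (csInf_le_csSup hR ⟨t, hlower⟩ (bddAbove_hyperplaneRatios hx hy))
  refine ⟨fun _ => inner_pos_of_mem_interior hx, fun _ => inner_pos_of_mem_interior hy, ?_⟩
  rw [← image_neg_log_hyperplaneRatios (x := x), ← image_hyperplaneRatios,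
    ← Real.log_csSup_of_pos hR (bddAbove_hyperplaneRatios hx hy) fun _ hr =>
      ht.trans_le (hlower hr),
    ← Real.neg_log_csInf_of_pos hR ⟨t, hlower⟩ hinf, dh,
    Mcoef_eq_sSup_hyperplaneRatios hbidual hx hy hR,
    mcoef_eq_sInf_hyperplaneRatios hbidual hx hy hR, Real.log_div hsup.ne' hinf.ne']
  ring

/-- Yamada'"'"'s supporting-hyperplane formula for the Hilbert metric on a closed pointed
convex cone with nonempty interior: for `x, y` interior points,
`d_h(x,y) = (1/2)·sup{log(⟨f,x⟩/⟨f,y⟩)} + (1/2)·sup{log(⟨f,y⟩/⟨f,x⟩)}`, the suprema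
running over nonzero `f ∈ C*`. -/
theorem stmt8 {m : ℕ} (C : Set (EuclideanSpace ℝ (Fin m)))
    (hadd : ∀ a ∈ C, ∀ b ∈ C, a + b ∈ C)
    (hsmul : ∀ c : ℝ, 0 < c → ∀ a ∈ C, c • a ∈ C)
    (hpointed : ∀ z ∈ C, -z ∈ C → z = 0)
    (hclosed : IsClosed C) (hint : (interior C).Nonempty) (hne : C ≠ Set.univ)
    (x y : EuclideanSpace ℝ (Fin m)) (hx : x ∈ interior C) (hy : y ∈ interior C) :
    (∀ f ∈ dualCone C, f ≠ 0 → 0 < ⟪f, x⟫) ∧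
    (∀ f ∈ dualCone C, f ≠ 0 → 0 < ⟪f, y⟫) ∧
    dh C x y =
      (1 / 2) * sSup {r : ℝ | ∃ f ∈ dualCone C, f ≠ 0 ∧ r = Real.log (⟪f, x⟫ / ⟪f, y⟫)} +
      (1 / 2) * sSup {r : ℝ | ∃ f ∈ dualCone C, f ≠ 0 ∧ r = Real.log (⟪f, y⟫ / ⟪f, x⟫)} :=
  stmt8_general C hadd hsmul hclosed hne x y hx hy
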